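/- arXiv:math-ph/0606024 — 3 statements merged into one kernel-verified Lean document; each statement's English description precedes it below -/
import Mathlib

section
/- Let n : U → S² be a differentiable map on an open subset U of ℝ³. Then at each point, |∇n|² ≥ 2‖n*ω‖, where n*ω is the pullback under n of the normalized area 2-form ω on S² and ‖·‖ is the norm on 2-forms induced by the Euclidean metric on ℝ³ and the round metric on S². Equivalently, for the components of n, Σ_i |∂_i n|² ≥ 2 max_{unit u,v orthogonal} |⟨n, ∂_u n × ∂_v n⟩|. -/
open Finset

/-!
Write `D = ∇n` at the point. Since `|n| = 1`, the pulled-back area form evaluated on orthonormal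
`u, v` is the triple product `⟨n, Du × Dv⟩`, whose absolute value is at most
`|Du| |Dv| ≤ (|Du|² + |Dv|²) / 2`. Bessel's inequality for the orthonormal pair `u, v`, applied to
each row of `D`, bounds `|Du|² + |Dv|²` by the Hilbert–Schmidt norm `∑ᵢ |∂ᵢ n|²` of `D`.
-/

open scoped InnerProductSpace Matrix

theorem Orthonormal.sum_norm_sq_apply_le {𝕜 E F ι κ : Type*} [RCLike 𝕜]
    [NormedAddCommGroup E] [InnerProductSpace 𝕜 E] [NormedAddCommGroup F] [InnerProductSpace 𝕜 F]
    [FiniteDimensional 𝕜 F] [Fintype ι] {v : κ → E} (hv : Orthonormal 𝕜 v) (s : Finset κ)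
    (b : OrthonormalBasis ι 𝕜 E) (T : E →L[𝕜] F) :
    ∑ k ∈ s, ‖T (v k)‖ ^ 2 ≤ ∑ i, ‖T (b i)‖ ^ 2 := by
  have : FiniteDimensional 𝕜 E := b.toBasis.finiteDimensional_of_finite
  have : CompleteSpace E := FiniteDimensional.complete 𝕜 E
  have : CompleteSpace F := FiniteDimensional.complete 𝕜 F
  let c := stdOrthonormalBasis 𝕜 F
  have hT : ∀ x j, ‖⟪c j, T x⟫_𝕜‖ = ‖⟪x, T.adjoint (c j)⟫_𝕜‖ := fun x j => by
    rw [← T.adjoint_inner_left, ← inner_conj_symm, RCLike.norm_conj]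
  -- Expand both sides in a basis `c` of `F`: the rows `T† (c j)` satisfy Bessel on the left and
  -- Parseval on the right.
  calc ∑ k ∈ s, ‖T (v k)‖ ^ 2
      = ∑ j, ∑ k ∈ s, ‖⟪v k, T.adjoint (c j)⟫_𝕜‖ ^ 2 := by
        simp_rw [← c.sum_sq_norm_inner_right (T _), hT]
        exact Finset.sum_comm
    _ ≤ ∑ j, ‖T.adjoint (c j)‖ ^ 2 := by
        gcongr with j
        exact hv.sum_inner_products_le _
    _ = ∑ i, ‖T (b i)‖ ^ 2 := by
        simp_rw [← b.sum_sq_norm_inner_right (T.adjoint _), ← c.sum_sq_norm_inner_right (T _), hT]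
        exact Finset.sum_comm

theorem abs_dotProduct_crossProduct_le (n a b : EuclideanSpace ℝ (Fin 3)) :
    |n.ofLp ⬝ᵥ (a.ofLp ⨯₃ b.ofLp)| ≤ ‖n‖ * (‖a‖ * ‖b‖) := by
  calc |n.ofLp ⬝ᵥ (a.ofLp ⨯₃ b.ofLp)|
      = |⟪WithLp.toLp 2 (a.ofLp ⨯₃ b.ofLp), n⟫_ℝ| := by
        simp [EuclideanSpace.inner_eq_star_dotProduct]
    _ ≤ ‖n‖ * ‖WithLp.toLp 2 (a.ofLp ⨯₃ b.ofLp)‖ := by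
        rw [mul_comm]; exact abs_real_inner_le_norm _ _
    _ ≤ ‖n‖ * (‖a‖ * ‖b‖) := by
        rw [InnerProductGeometry.norm_ofLp_crossProduct]
        gcongr ‖n‖ * ?_
        exact mul_le_of_le_one_right (by positivity) (Real.sin_le_one _)

theorem stmt_4_general (U : Set (EuclideanSpace ℝ (Fin 3)))
    (f : EuclideanSpace ℝ (Fin 3) → EuclideanSpace ℝ (Fin 3))
    (hf : ∀ y ∈ U, ‖f y‖ = 1) (x : EuclideanSpace ℝ (Fin 3)) (hx : x ∈ U)
    (u v : EuclideanSpace ℝ (Fin 3)) (hu : ‖u‖ = 1) (hv : ‖v‖ = 1)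
    (huv : (inner ℝ u v : ℝ) = 0) :
    2 * |∑ i, (f x) i *
        (crossProduct (fun j => fderiv ℝ f x u j) (fun j => fderiv ℝ f x v j)) i| ≤
      ∑ i, ‖fderiv ℝ f x (EuclideanSpace.single i 1)‖ ^ 2 := by
  set D := fderiv ℝ f x
  have horth : Orthonormal ℝ ![u, v] := by simp [hu, hv, huv]
  calc 2 * |(f x).ofLp ⬝ᵥ ((D u).ofLp ⨯₃ (D v).ofLp)|
      ≤ 2 * (‖D u‖ * ‖D v‖) := by
        simpa [hf x hx] using abs_dotProduct_crossProduct_le (f x) (D u) (D v)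
    _ ≤ ∑ k, ‖D (![u, v] k)‖ ^ 2 := by
        simpa [Fin.sum_univ_two, ← mul_assoc] using two_mul_le_add_sq ‖D u‖ ‖D v‖
    _ ≤ ∑ i, ‖D (EuclideanSpace.basisFun (Fin 3) ℝ i)‖ ^ 2 :=
        horth.sum_norm_sq_apply_le univ _ D
    _ = ∑ i, ‖D (EuclideanSpace.single i 1)‖ ^ 2 := by simp

theorem stmt_4 (U : Set (EuclideanSpace ℝ (Fin 3))) (hU : IsOpen U)
    (f : EuclideanSpace ℝ (Fin 3) → EuclideanSpace ℝ (Fin 3))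
    (hf : ∀ y ∈ U, ‖f y‖ = 1) (x : EuclideanSpace ℝ (Fin 3)) (hx : x ∈ U)
    (hdiff : DifferentiableAt ℝ f x)
    (u v : EuclideanSpace ℝ (Fin 3)) (hu : ‖u‖ = 1) (hv : ‖v‖ = 1)
    (huv : (inner ℝ u v : ℝ) = 0) :
    2 * |∑ i, (f x) i *
        (crossProduct (fun j => fderiv ℝ f x u j) (fun j => fderiv ℝ f x v j)) i| ≤
      ∑ i, ‖fderiv ℝ f x (EuclideanSpace.single i 1)‖ ^ 2 :=
  stmt_4_general U f hf x hx u v hu hv huv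
end

section
/- For every positive integer c and every t of the form t_l = (1 − 1/(c+1))^{1/2} e^{iα_l} with π/8 < α_l ≤ 3π/8, and every real α ∈ [0, π/2]: |e^{2iα} − t̄_l²|² ≥ sin²(π/8) and |e^{2iα} − t_l²|² ≥ 1/(c+1)² + (8/π²)(α_l − α)². -/
open Real Complex

/-!
Writing `t = √r e^{iα_l}` with `r = 1 - 1/(c+1) ≥ 1/2`, both quantities are instances of
`|e^{iθ} - r e^{iφ}|² = (1 - r)² + 4 r sin²((θ - φ)/2)`. For `t̄²` the angle `α + α_l` lies in
`[π/8, 7π/8]`, where `sin ≥ sin (π/8)`; for `t²` the angle `α_l - α` has modulus at most `π/2`,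
where Jordan's inequality gives `sin² x ≥ (4/π²) x²`.
-/

lemma norm_exp_mul_I_sub_ofReal_mul_exp_mul_I_sq (r θ φ : ℝ) :
    ‖Complex.exp (I * θ) - r * Complex.exp (I * φ)‖ ^ 2
      = (1 - r) ^ 2 + 4 * r * Real.sin ((θ - φ) / 2) ^ 2 := by
  have hcos : Real.cos θ * Real.cos φ + Real.sin θ * Real.sin φ
      = 1 - 2 * Real.sin ((θ - φ) / 2) ^ 2 := by
    rw [← Real.cos_sub, ← Real.cos_two_mul_eq_one_sub, mul_div_cancel₀ _ two_ne_zero]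
  rw [Complex.sq_norm, Complex.normSq_apply, mul_comm I, mul_comm I, exp_mul_I, exp_mul_I]
  simp only [← ofReal_cos, ← ofReal_sin, sub_re, sub_im, add_re, add_im, mul_re, mul_im,
    ofReal_re, ofReal_im, I_re, I_im]
  linear_combination Real.sin_sq_add_cos_sq θ + r ^ 2 * Real.sin_sq_add_cos_sq φ - 2 * r * hcos

lemma sin_le_sin_of_mem_Icc {a x : ℝ} (ha : -(π / 2) ≤ a) (hx : x ∈ Set.Icc a (π - a)) :
    Real.sin a ≤ Real.sin x := by
  obtain ⟨hax, hxa⟩ := hx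
  rcases le_total x (π / 2) with hx | hx
  · exact Real.sin_le_sin_of_le_of_le_pi_div_two ha hx hax
  · rw [← Real.sin_pi_sub x]
    exact Real.sin_le_sin_of_le_of_le_pi_div_two ha (by linarith) (by linarith)

lemma four_div_pi_sq_mul_sq_le_sin_sq {x : ℝ} (hx : |x| ≤ π / 2) :
    4 / π ^ 2 * x ^ 2 ≤ Real.sin x ^ 2 := by
  have h := pow_le_pow_left₀ (by positivity) (Real.mul_abs_le_abs_sin hx) 2
  rwa [mul_pow, sq_abs, sq_abs, div_pow, show (2 : ℝ) ^ 2 = 4 by norm_num] at h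

lemma ofReal_sqrt_mul_exp_mul_I_sq {s : ℝ} (hs : 0 ≤ s) (a : ℝ) :
    ((√s : ℝ) * Complex.exp (I * a) : ℂ) ^ 2 = s * Complex.exp (I * (2 * a : ℝ)) := by
  rw [mul_pow, ← ofReal_pow, Real.sq_sqrt hs, ← Complex.exp_nat_mul]
  push_cast
  ring_nf

lemma conj_ofReal_mul_exp_mul_I (s a : ℝ) :
    starRingEnd ℂ ((s : ℂ) * Complex.exp (I * a)) = s * Complex.exp (I * (-a : ℝ)) := by
  rw [map_mul, conj_ofReal, ← Complex.exp_conj, map_mul, conj_I, conj_ofReal]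
  push_cast
  ring_nf

theorem stmt_11 (c : ℕ) (hc : 1 ≤ c) (αl : ℝ)
    (hαl : π / 8 < αl ∧ αl ≤ 3 * π / 8)
    (t : ℂ)
    (ht : t = (Real.sqrt (1 - 1 / (c + 1)) : ℝ) * Complex.exp (Complex.I * αl))
    (α : ℝ) (hα : α ∈ Set.Icc (0 : ℝ) (π / 2)) :
    Real.sin (π / 8) ^ 2 ≤
        ‖Complex.exp (Complex.I * (2 * α)) - (starRingEnd ℂ t) ^ 2‖ ^ 2 ∧
      1 / ((c : ℝ) + 1) ^ 2 + (8 / π ^ 2) * (αl - α) ^ 2 ≤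
        ‖Complex.exp (Complex.I * (2 * α)) - t ^ 2‖ ^ 2 := by
  obtain ⟨hαl₁, hαl₂⟩ := hαl
  obtain ⟨hα₀, hα₁⟩ := hα
  set r := 1 - 1 / ((c : ℝ) + 1)
  have hr : 1 / 2 ≤ r := by
    have hc' : (2 : ℝ) ≤ c + 1 := by exact_mod_cast Nat.succ_le_succ hc
    linarith [one_div_le_one_div_of_le two_pos hc']
  have h2α : I * (2 * (α : ℂ)) = I * ((2 * α : ℝ) : ℂ) := by push_cast; rfl
  have hπ := Real.pi_pos
  constructor
  · rw [ht, conj_ofReal_mul_exp_mul_I, ofReal_sqrt_mul_exp_mul_I_sq (by linarith), h2α,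
      norm_exp_mul_I_sub_ofReal_mul_exp_mul_I_sq, show (2 * α - 2 * -αl) / 2 = α + αl by ring]
    have hsin : Real.sin (π / 8) ≤ Real.sin (α + αl) :=
      sin_le_sin_of_mem_Icc (by linarith) ⟨by linarith, by linarith⟩
    have hsin₀ : 0 ≤ Real.sin (π / 8) :=
      Real.sin_nonneg_of_nonneg_of_le_pi (by positivity) (by linarith)
    calc Real.sin (π / 8) ^ 2 ≤ Real.sin (α + αl) ^ 2 := by gcongr
      _ ≤ 4 * r * Real.sin (α + αl) ^ 2 := le_mul_of_one_le_left (sq_nonneg _) (by linarith)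
      _ ≤ (1 - r) ^ 2 + 4 * r * Real.sin (α + αl) ^ 2 := le_add_of_nonneg_left (sq_nonneg _)
  · rw [ht, ofReal_sqrt_mul_exp_mul_I_sq (by linarith), h2α,
      norm_exp_mul_I_sub_ofReal_mul_exp_mul_I_sq, show (2 * α - 2 * αl) / 2 = -(αl - α) by ring,
      Real.sin_neg, neg_sq, show 1 - r = 1 / ((c : ℝ) + 1) by ring, div_pow, one_pow]
    have hjordan : 4 / π ^ 2 * (αl - α) ^ 2 ≤ Real.sin (αl - α) ^ 2 :=
      four_div_pi_sq_mul_sq_le_sin_sq (abs_le.2 ⟨by linarith, by linarith⟩)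
    calc 1 / ((c : ℝ) + 1) ^ 2 + 8 / π ^ 2 * (αl - α) ^ 2
        = 1 / ((c : ℝ) + 1) ^ 2 + 2 * (4 / π ^ 2 * (αl - α) ^ 2) := by ring
      _ ≤ 1 / ((c : ℝ) + 1) ^ 2 + 2 * Real.sin (αl - α) ^ 2 := by gcongr
      _ ≤ 1 / ((c : ℝ) + 1) ^ 2 + 4 * r * Real.sin (αl - α) ^ 2 := by gcongr; linarith
end

section
/- Let G, 𝒢 > 0 with 𝒢 ≤ G. There is an absolute constant C such that ∫₀¹ ((1−x)²/g(x) + x² g(x))^{−2} dx ≤ C (G + 1/𝒢) for every measurable function g : [0,1] → ℝ with 𝒢 ≤ g(x) ≤ G for all x. -/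
/-!
On `[0, 1/2]` the denominator `D = (1 - x)² / g + x² g` is at least `2x(1 - x) ≥ x` by AM–GM and
at least `(1 - x)² / G ≥ 1 / (4G)`, so `2D ≥ x + 1 / (4G)` and
`∫₀^{1/2} D⁻² ≤ 4 ∫₀^∞ (x + 1/(4G))⁻² = 16 G`.
The substitution `x ↦ 1 - x`, `g ↦ 1 / g` leaves `D` unchanged and turns the bound `𝒢 ≤ g` on
`[1/2, 1]` into `1/g ≤ 1/𝒢` on `[0, 1/2]`, giving `16 / 𝒢` for the right half.
-/

open MeasureTheory Set intervalIntegral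

noncomputable def invSqDenom (g : ℝ → ℝ) (x : ℝ) : ℝ := 1 / ((1 - x) ^ 2 / g x + x ^ 2 * g x) ^ 2

lemma two_mul_mul_le_sq_div_add_sq_mul {a b g : ℝ} (hg : 0 < g) :
    2 * a * b ≤ b ^ 2 / g + a ^ 2 * g := by
  rw [div_add' _ _ _ hg.ne', le_div_iff₀ hg]
  nlinarith [sq_nonneg (b - a * g)]

lemma integral_inv_add_sq {c t : ℝ} (hc : 0 < c) (ht : 0 ≤ t) :
    ∫ x in (0 : ℝ)..t, ((x + c) ^ 2)⁻¹ = c⁻¹ - (t + c)⁻¹ := by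
  have hzero : (0 : ℝ) ∉ uIcc c (t + c) := by
    rw [uIcc_of_le (by linarith)]
    exact fun h => hc.not_ge h.1
  rw [integral_comp_add_right (fun x => (x ^ 2)⁻¹), zero_add]
  simp only [← zpow_natCast, ← zpow_neg]
  rw [integral_zpow (Or.inr ⟨by norm_num, hzero⟩)]
  norm_num
  ring

lemma invSqDenom_eq_reflect (g : ℝ → ℝ) (x : ℝ) :
    invSqDenom g x = invSqDenom (fun y => (g (1 - y))⁻¹) (1 - x) := by
  simp only [invSqDenom, sub_sub_cancel, div_inv_eq_mul]
  ring

lemma add_le_two_mul_denom {x g G : ℝ} (hx₀ : 0 ≤ x) (hx : x ≤ 1 / 2) (hg : 0 < g)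
    (hgG : g ≤ G) : x + (4 * G)⁻¹ ≤ 2 * ((1 - x) ^ 2 / g + x ^ 2 * g) := by
  have hG : 0 < G := hg.trans_le hgG
  have hmiddle := two_mul_mul_le_sq_div_add_sq_mul (a := x) (b := 1 - x) hg
  have hx_le : x ≤ 2 * x * (1 - x) := by nlinarith
  have houter : (4 * G)⁻¹ ≤ (1 - x) ^ 2 / g :=
    calc (4 * G)⁻¹ ≤ (1 - x) ^ 2 / G := by
          have hquarter : 1 / 4 ≤ (1 - x) ^ 2 := by nlinarith
          rw [← one_div, div_le_div_iff₀ (by positivity) hG]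
          nlinarith
      _ ≤ (1 - x) ^ 2 / g := by gcongr
  linarith [mul_nonneg (sq_nonneg x) hg.le]

lemma invSqDenom_le {x g G : ℝ} (hx₀ : 0 ≤ x) (hx : x ≤ 1 / 2) (hg : 0 < g)
    (hgG : g ≤ G) : 1 / ((1 - x) ^ 2 / g + x ^ 2 * g) ^ 2 ≤ 4 * ((x + (4 * G)⁻¹) ^ 2)⁻¹ := by
  have hG : 0 < G := hg.trans_le hgG
  have h := add_le_two_mul_denom hx₀ hx hg hgG
  calc 1 / ((1 - x) ^ 2 / g + x ^ 2 * g) ^ 2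
      = 4 / (2 * ((1 - x) ^ 2 / g + x ^ 2 * g)) ^ 2 := by rw [mul_pow, ← div_div]; norm_num
    _ ≤ 4 / (x + (4 * G)⁻¹) ^ 2 := by gcongr
    _ = 4 * ((x + (4 * G)⁻¹) ^ 2)⁻¹ := div_eq_mul_inv _ _

lemma integral_invSqDenom_left_half_le {g : ℝ → ℝ} {G : ℝ} (hgm : Measurable g)
    (hg : ∀ x ∈ Icc (0 : ℝ) (1 / 2), 0 < g x ∧ g x ≤ G) :
    IntervalIntegrable (invSqDenom g) volume 0 (1 / 2) ∧
      ∫ x in (0 : ℝ)..1 / 2, invSqDenom g x ≤ 16 * G := by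
  obtain ⟨hg₀, hg₀G⟩ := hg 0 ⟨le_rfl, by norm_num⟩
  set c := (4 * G)⁻¹
  have hc : 0 < c := by have := hg₀.trans_le hg₀G; positivity
  have hle : ∀ x ∈ Icc (0 : ℝ) (1 / 2), invSqDenom g x ≤ 4 * ((x + c) ^ 2)⁻¹ :=
    fun x hx => invSqDenom_le hx.1 hx.2 (hg x hx).1 (hg x hx).2
  have hbound_int : IntervalIntegrable (fun x => 4 * ((x + c) ^ 2)⁻¹) volume 0 (1 / 2) := by
    refine (continuousOn_const.mul (ContinuousOn.inv₀ (by fun_prop) ?_)).intervalIntegrable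
    intro x hx
    rw [uIcc_of_le (by norm_num)] at hx
    have := hx.1
    positivity
  have hmeas : Measurable (invSqDenom g) := by unfold invSqDenom; fun_prop
  have hint : IntervalIntegrable (invSqDenom g) volume 0 (1 / 2) := by
    refine hbound_int.mono_fun' (hmeas.aestronglyMeasurable) ?_
    rw [uIoc_of_le (by norm_num), Filter.EventuallyLE, ae_restrict_iff' measurableSet_Ioc]
    refine Filter.Eventually.of_forall fun x hx => ?_
    rw [Real.norm_of_nonneg (by unfold invSqDenom; positivity)]
    exact hle x (Ioc_subset_Icc_self hx)
  refine ⟨hint, ?_⟩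
  calc ∫ x in (0 : ℝ)..1 / 2, invSqDenom g x
      ≤ ∫ x in (0 : ℝ)..1 / 2, 4 * ((x + c) ^ 2)⁻¹ :=
        integral_mono_on (by norm_num) hint hbound_int hle
    _ = 4 * (c⁻¹ - (1 / 2 + c)⁻¹) := by
        rw [intervalIntegral.integral_const_mul, integral_inv_add_sq hc (by norm_num)]
    _ ≤ 4 * c⁻¹ := by gcongr; exact sub_le_self _ (by positivity)
    _ = 16 * G := by simp only [c, inv_inv]; ring

lemma integral_invSqDenom_right_half_le {g : ℝ → ℝ} {𝒢 : ℝ} (hgm : Measurable g)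
    (h𝒢 : 0 < 𝒢) (hg : ∀ x ∈ Icc (1 / 2 : ℝ) 1, 𝒢 ≤ g x) :
    IntervalIntegrable (invSqDenom g) volume (1 / 2) 1 ∧
      ∫ x in (1 / 2 : ℝ)..1, invSqDenom g x ≤ 16 / 𝒢 := by
  have hreflect : invSqDenom g = fun x => invSqDenom (fun y => (g (1 - y))⁻¹) (1 - x) :=
    funext (invSqDenom_eq_reflect g)
  obtain ⟨hint, hle⟩ := integral_invSqDenom_left_half_le
    (g := fun y => (g (1 - y))⁻¹) (G := 𝒢⁻¹) (hgm.comp (measurable_const.sub measurable_id)).inv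
    fun x hx => by
      have h𝒢g : 𝒢 ≤ g (1 - x) := hg (1 - x) ⟨by linarith [hx.2], by linarith [hx.1]⟩
      exact ⟨inv_pos.2 (h𝒢.trans_le h𝒢g), inv_anti₀ h𝒢 h𝒢g⟩
  rw [hreflect]
  constructor
  · convert (hint.comp_sub_left 1).symm using 1 <;> norm_num
  · rw [integral_comp_sub_left]
    norm_num
    exact hle.trans_eq (div_eq_mul_inv 16 𝒢).symm

theorem stmt_13 :
    ∃ C : ℝ, 0 < C ∧
      ∀ G 𝒢 : ℝ, 0 < 𝒢 → 𝒢 ≤ G →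
        ∀ g : ℝ → ℝ, Measurable g →
          (∀ x ∈ Set.Icc (0 : ℝ) 1, 𝒢 ≤ g x ∧ g x ≤ G) →
            (∫ x in (0 : ℝ)..1, 1 / ((1 - x) ^ 2 / g x + x ^ 2 * g x) ^ 2) ≤
              C * (G + 1 / 𝒢) := by
  refine ⟨16, by norm_num, fun G 𝒢 h𝒢 _ g hgm hg => ?_⟩
  obtain ⟨hint_left, hleft⟩ := integral_invSqDenom_left_half_le (G := G) hgm fun x hx =>
    have hx' : x ∈ Icc (0 : ℝ) 1 := ⟨hx.1, by linarith [hx.2]⟩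
    ⟨h𝒢.trans_le (hg x hx').1, (hg x hx').2⟩
  obtain ⟨hint_right, hright⟩ := integral_invSqDenom_right_half_le hgm h𝒢 fun x hx =>
    (hg x ⟨by linarith [hx.1], hx.2⟩).1
  change ∫ x in (0 : ℝ)..1, invSqDenom g x ≤ _
  rw [← integral_add_adjacent_intervals hint_left hint_right, mul_add, ← div_eq_mul_one_div]
  exact add_le_add hleft hright
end
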